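/- arXiv:1806.06797 — 2 statements merged into one kernel-verified Lean document; each statement's English description precedes it below -/
import Mathlib

section
/- Under the identification ℍ = ℂ², the monogenic hull of ℍ \ {0}, defined as {(x,y) ∈ M₂(ℂ) : x + yq ≠ 0 for all unit imaginary quaternions q}, equals GL(2,ℂ), i.e. the set of 2×2 complex matrices with nonzero determinant. -/
open Quaternion Matrix

/-!
Under `(x, y) ↦ M(x) + i·M(y)` the determinant is `|x|² - |y|² + 2i·Re(ȳx)`. On the other hand
`x + yq = 0` with `q` a purely imaginary unit forces `q = -y⁻¹x` (or `x = y = 0`), and `-y⁻¹x` is a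
purely imaginary unit exactly when `|x| = |y|` and `Re(ȳx) = 0`.
-/

/-- The standard embedding `ℍ → M₂(ℂ)`, `q = α + kβ ↦ [[α, -conj β], [β, conj α]]`. -/
noncomputable def quatToMatrix (q : Quaternion ℝ) : Matrix (Fin 2) (Fin 2) ℂ :=
  !![Complex.mk q.re q.imI, -(starRingEnd ℂ) (Complex.mk q.imK q.imJ);
     Complex.mk q.imK q.imJ, (starRingEnd ℂ) (Complex.mk q.re q.imI)]

namespace Quaternion

theorem re_star_mul_mul {R : Type*} [CommRing R] (a b : ℍ[R]) :
    (star a * (a * b)).re = normSq a * b.re := by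
  rw [← mul_assoc, star_mul_self, coe_mul_eq_smul, re_smul, smul_eq_mul]

theorem re_inv_mul {R : Type*} [Field R] [LinearOrder R] [IsStrictOrderedRing R] (a b : ℍ[R]) :
    (a⁻¹ * b).re = (normSq a)⁻¹ * (star a * b).re := by
  rw [inv_def, smul_mul_assoc, re_smul, smul_eq_mul]

theorem norm_eq_norm_iff_normSq_eq {a b : ℍ[ℝ]} : ‖a‖ = ‖b‖ ↔ normSq a = normSq b := by
  rw [normSq_eq_norm_mul_self, normSq_eq_norm_mul_self,
    mul_self_inj (norm_nonneg a) (norm_nonneg b)]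

theorem exists_re_eq_zero_norm_eq_one : ∃ q : ℍ[ℝ], q.re = 0 ∧ ‖q‖ = 1 :=
  ⟨(Complex.I : ℍ), rfl,
    (norm_eq_norm_iff_normSq_eq.2 <| by simp [normSq_def']).trans norm_one⟩

theorem exists_pure_unit_add_mul_eq_zero_iff (x y : ℍ[ℝ]) :
    (∃ q : ℍ[ℝ], q.re = 0 ∧ ‖q‖ = 1 ∧ x + y * q = 0) ↔
      normSq x = normSq y ∧ (star y * x).re = 0 := by
  constructor
  · rintro ⟨q, hre, hnorm, hxyq⟩
    obtain rfl : x = -(y * q) := eq_neg_of_add_eq_zero_left hxyq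
    have hq : normSq q = 1 := by rwa [← normSq.map_one, ← norm_eq_norm_iff_normSq_eq, norm_one]
    refine ⟨by rw [normSq_neg, map_mul, hq, mul_one], ?_⟩
    rw [mul_neg, re_neg, re_star_mul_mul, hre, mul_zero, neg_zero]
  · rintro ⟨hnorm, hre⟩
    rcases eq_or_ne y 0 with rfl | hy
    · obtain ⟨q, hq⟩ := exists_re_eq_zero_norm_eq_one
      refine ⟨q, hq.1, hq.2, ?_⟩
      rw [map_zero, normSq_eq_zero] at hnorm
      simp [hnorm]
    · refine ⟨-(y⁻¹ * x), ?_, ?_, ?_⟩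
      · rw [re_neg, re_inv_mul, hre, mul_zero, neg_zero]
      · rw [norm_neg, norm_mul, norm_inv, norm_eq_norm_iff_normSq_eq.2 hnorm,
          inv_mul_cancel₀ (norm_ne_zero_iff.2 hy)]
      · rw [mul_neg, ← mul_assoc, mul_inv_cancel₀ hy, one_mul, add_neg_cancel]

end Quaternion

theorem det_quatToMatrix_add_I_smul (x y : ℍ[ℝ]) :
    (quatToMatrix x + Complex.I • quatToMatrix y).det =
      ⟨normSq x - normSq y, 2 * (star y * x).re⟩ := by
  simp [quatToMatrix, det_fin_two, Complex.ext_iff, normSq_def', Complex.mul_re, Complex.mul_im]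
  constructor <;> ring

theorem det_quatToMatrix_add_I_smul_eq_zero_iff (x y : ℍ[ℝ]) :
    (quatToMatrix x + Complex.I • quatToMatrix y).det = 0 ↔
      normSq x = normSq y ∧ (star y * x).re = 0 := by
  simp [det_quatToMatrix_add_I_smul, Complex.ext_iff, sub_eq_zero]

/-- The monogenic hull of `ℍ \ {0}` is `GL(2, ℂ)`: a pair `(x, y) ∈ ℍ × ℍ = M₂(ℂ)`
satisfies `x + yq ≠ 0` for all purely imaginary unit quaternions `q` if and only if
the matrix `M(x) + i·M(y)` has nonzero determinant. -/
theorem monogenicHull_of_punctured_quaternions_eq_GL :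
    {p : Quaternion ℝ × Quaternion ℝ |
        ∀ q : Quaternion ℝ, q.re = 0 → ‖q‖ = 1 → p.1 + p.2 * q ≠ 0} =
      {p : Quaternion ℝ × Quaternion ℝ |
        (quatToMatrix p.1 + Complex.I • quatToMatrix p.2).det ≠ 0} := by
  ext ⟨x, y⟩
  rw [Set.mem_ofPred_eq, Set.mem_ofPred_eq, ne_eq, det_quatToMatrix_add_I_smul_eq_zero_iff,
    ← exists_pure_unit_add_mul_eq_zero_iff]
  simp only [not_exists, not_and]
end

section
/- Let h: ℂ → ℂ be continuous and suppose there exists a continuous function h₁: ℂ → ℂ and an integer k ≤ -2 such that h₁(1/z) = -z^{-k}·conj(z)²·h(z) for all z ≠ 0. Then for every integer ℓ with 0 ≤ ℓ ≤ -k-2, the function z ↦ z^ℓ h(z) is integrable on ℂ with respect to Lebesgue measure. -/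
/-!
Near infinity the compatibility condition gives `‖z^ℓ h z‖ = ‖h₁ z⁻¹‖ ‖z‖^(ℓ+k-2)`, and
`h₁ z⁻¹ → h₁ 0` is bounded, so `z^ℓ h z = O(‖z‖⁻⁴)` at infinity; this is integrable away from
a compact set in real dimension two, and the function is continuous, hence locally integrable.
-/

open Asymptotics Filter MeasureTheory Module

theorem norm_rpow_isBigO_one_add_norm_rpow {E : Type*} [NormedAddCommGroup E] [ProperSpace E]
    {s : ℝ} (hs : s ≤ 0) :
    (fun x : E => ‖x‖ ^ s) =O[cocompact E] fun x => (1 + ‖x‖) ^ s := by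
  refine IsBigO.of_bound ((2 : ℝ) ^ (-s)) ?_
  filter_upwards [tendsto_norm_cocompact_atTop.eventually_ge_atTop (1 : ℝ)] with x hx
  have hx0 : 0 < ‖x‖ := zero_lt_one.trans_le hx
  rw [Real.norm_of_nonneg (by positivity), Real.norm_of_nonneg (by positivity)]
  calc ‖x‖ ^ s = 2 ^ (-s) * (2 * ‖x‖) ^ s := by
        rw [Real.mul_rpow zero_le_two hx0.le, ← mul_assoc, ← Real.rpow_add zero_lt_two,
          neg_add_cancel, Real.rpow_zero, one_mul]
    _ ≤ 2 ^ (-s) * (1 + ‖x‖) ^ s := by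
        gcongr ?_ * ?_
        exact Real.rpow_le_rpow_of_nonpos (by positivity) (by linarith) hs

theorem integrableAtFilter_cocompact_norm_rpow {E : Type*} [NormedAddCommGroup E]
    [NormedSpace ℝ E] [FiniteDimensional ℝ E] [MeasurableSpace E] [BorelSpace E]
    (μ : Measure E) [μ.IsAddHaarMeasure] {s : ℝ} (hs : s < -finrank ℝ E) :
    IntegrableAtFilter (fun x : E => ‖x‖ ^ s) (cocompact E) μ := by
  have hint : Integrable (fun x : E => (1 + ‖x‖) ^ s) μ := by
    simpa using integrable_one_add_norm (μ := μ) (r := -s) (by linarith)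
  have hmeas : Measurable fun x : E => ‖x‖ ^ s := by fun_prop
  exact (norm_rpow_isBigO_one_add_norm_rpow (hs.le.trans (by simp))).integrableAtFilter
    hmeas.aestronglyMeasurable.stronglyMeasurableAtFilter (hint.integrableAtFilter _)

theorem isBigO_cocompact_comp_inv {𝕜 F : Type*} [NormedField 𝕜] [ProperSpace 𝕜]
    [NormedAddCommGroup F] {g : 𝕜 → F} (hg : ContinuousAt g 0) :
    (fun z => g z⁻¹) =O[cocompact 𝕜] fun _ => (1 : ℝ) := by
  rw [← Metric.cobounded_eq_cocompact]
  exact (hg.tendsto.comp tendsto_inv₀_cobounded).isBigO_one ℝ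

theorem norm_zpow_mul_eq_of_eq_neg {k ℓ : ℤ} {z v w : ℂ} (hz : z ≠ 0)
    (hw : w = -(z ^ (-k) * (starRingEnd ℂ) z ^ 2 * v)) :
    ‖z ^ ℓ * v‖ = ‖w‖ * ‖z‖ ^ (ℓ + k - 2) := by
  have hz' : ‖z‖ ≠ 0 := norm_ne_zero_iff.mpr hz
  have hpow : ‖z‖ ^ ℓ = ‖z‖ ^ (-k) * ‖z‖ ^ 2 * ‖z‖ ^ (ℓ + k - 2) := by
    rw [← zpow_natCast, ← zpow_add₀ hz', ← zpow_add₀ hz']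
    ring_nf
  rw [hw, norm_neg, norm_mul, norm_mul, norm_mul, norm_zpow, norm_zpow, norm_pow,
    Complex.norm_conj, hpow]
  ring

theorem isBigO_cocompact_zpow_of_eq_neg {k ℓ : ℤ} {h h₁ : ℂ → ℂ} (hcont₁ : ContinuousAt h₁ 0)
    (hcompat : ∀ z : ℂ, z ≠ 0 → h₁ z⁻¹ = -(z ^ (-k) * (starRingEnd ℂ) z ^ 2 * h z)) :
    (fun z : ℂ => z ^ ℓ * h z) =O[cocompact ℂ] fun z => ‖z‖ ^ (ℓ + k - 2) := by
  have hnorm : (fun z : ℂ => ‖z ^ ℓ * h z‖) =ᶠ[cocompact ℂ]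
      fun z => ‖h₁ z⁻¹‖ * ‖z‖ ^ (ℓ + k - 2) := by
    filter_upwards [tendsto_norm_cocompact_atTop.eventually_gt_atTop (0 : ℝ)] with z hz
    exact norm_zpow_mul_eq_of_eq_neg (norm_pos_iff.mp hz) (hcompat z (norm_pos_iff.mp hz))
  simpa only [one_mul] using (IsBigO.of_norm_eventuallyLE hnorm.le).trans
    ((isBigO_cocompact_comp_inv hcont₁).norm_left.mul (isBigO_refl _ _))

theorem integrable_of_global_form_general (k : ℤ) (h h₁ : ℂ → ℂ)
    (hcont : Continuous h) (hcont₁ : Continuous h₁)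
    (hcompat : ∀ z : ℂ, z ≠ 0 → h₁ z⁻¹ = -(z ^ (-k) * (starRingEnd ℂ) z ^ 2 * h z))
    (ℓ : ℤ) (hℓ0 : 0 ≤ ℓ) (hℓ : ℓ ≤ -k - 2) :
    Integrable (fun z : ℂ => z ^ ℓ * h z) := by
  have hloc : LocallyIntegrable (fun z : ℂ => z ^ ℓ * h z) :=
    ((continuous_id.zpow₀ ℓ fun _ => Or.inr hℓ0).mul hcont).locallyIntegrable
  have hdecay : (fun z : ℂ => z ^ ℓ * h z) =O[cocompact ℂ]
      fun z => ‖z‖ ^ ((ℓ + k - 2 : ℤ) : ℝ) := by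
    simpa only [Real.rpow_intCast] using
      isBigO_cocompact_zpow_of_eq_neg hcont₁.continuousAt hcompat
  refine hloc.integrable_of_isBigO_cocompact hdecay (integrableAtFilter_cocompact_norm_rpow _ ?_)
  rw [Complex.finrank_real_complex]
  exact_mod_cast (by omega : ℓ + k - 2 < -2)

/-- If `h` is the chart representative of a global continuous `(0,1)`-form with
values in `O(k)` on `ℂP¹`, i.e. `h₁(1/z) = -z^{-k} conj(z)² h(z)` with `h₁`
continuous, and `k ≤ -2`, then `z ↦ zˡ h(z)` is Lebesgue-integrable on `ℂ`
for each `0 ≤ ℓ ≤ -k - 2`. -/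
theorem integrable_of_global_form (k : ℤ) (hk : k ≤ -2) (h h₁ : ℂ → ℂ)
    (hcont : Continuous h) (hcont₁ : Continuous h₁)
    (hcompat : ∀ z : ℂ, z ≠ 0 → h₁ z⁻¹ = -(z ^ (-k) * (starRingEnd ℂ) z ^ 2 * h z))
    (ℓ : ℤ) (hℓ0 : 0 ≤ ℓ) (hℓ : ℓ ≤ -k - 2) :
    Integrable (fun z : ℂ => z ^ ℓ * h z) :=
  integrable_of_global_form_general k h h₁ hcont hcont₁ hcompat ℓ hℓ0 hℓ
end
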